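/- Let a, b, N be positive integers and let u' = (u'_1, …, u'_N) be a sequence of nonnegative integers. Set w := a·u' (entrywise) and define sequences v_1, …, v_b entrywise by v_1 := ⌈w/b⌉ and, for 2 ≤ i ≤ b, v_i := ⌈(w − (v_1 + … + v_{i−1}))/(b−i+1)⌉. Then for every 1 ≤ i ≤ b−1 and every 1 ≤ t ≤ N one has v_i(t) ≥ v_{i+1}(t) (so v_i − v_{i+1} is a nonnegative integer sequence); moreover, if u' is weakly increasing then each v_i is weakly increasing. -/
import Mathlib


/-- `Spartial b w i = v 1 + ⋯ + v i`, where `v 1 = ⌈w/b⌉` and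
`v i = ⌈(w - (v 1 + ⋯ + v (i-1)))/(b-i+1)⌉`.  (For naturals,
`⌈x/d⌉ = (x + d - 1)/d`.) -/
def Spartial (b w : ℕ) : ℕ → ℕ
  | 0 => 0
  | k + 1 => Spartial b w k + (w - Spartial b w k + (b - k) - 1) / (b - k)

/-- `vval b w i = v i`, the `i`-th term of the greedy ceiling decomposition of
`w` into `b` parts. -/
def vval (b w i : ℕ) : ℕ := Spartial b w i - Spartial b w (i - 1)

/-- ceiling division bound: x ≤ m * ⌈x/m⌉ -/
lemma le_mul_ceil (x m : ℕ) (hm : 0 < m) : x ≤ m * ((x + m - 1) / m) := by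
  have h1 := Nat.div_add_mod (x + m - 1) m
  have h2 := Nat.mod_lt (x + m - 1) hm
  omega

lemma ceil_le_self (x m : ℕ) (hm : 0 < m) : (x + m - 1) / m ≤ x := by
  rw [Nat.div_le_iff_le_mul_add_pred hm]
  have hx : x ≤ m * x := Nat.le_mul_of_pos_left x hm
  omega

lemma Spartial_le (b w k : ℕ) : Spartial b w k ≤ w := by
  induction k with
  | zero => simp [Spartial]
  | succ k ih =>
    rw [Spartial]
    rcases Nat.eq_zero_or_pos (b - k) with h | h
    · simp [h, ih]
    · have := ceil_le_self (w - Spartial b w k) (b - k) h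
      omega

lemma vval_succ (b w k : ℕ) :
    vval b w (k + 1) = (w - Spartial b w k + (b - k) - 1) / (b - k) := by
  simp [vval, Spartial]

/-- x - ⌈x/m⌉ is monotone -/
lemma sub_ceil_mono (m : ℕ) {x y : ℕ} (h : x ≤ y) :
    x - (x + m - 1) / m ≤ y - (y + m - 1) / m := by
  rcases Nat.eq_zero_or_pos m with h0 | h0
  · simp [h0]; omega
  · have hx : (x + m - 1) / m ≤ x := ceil_le_self x m h0
    have hy : (y + m - 1) / m ≤ y := ceil_le_self y m h0
    have hmono : (y + m - 1) / m ≤ (x + m - 1) / m + (y - x) := by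
      have h1 : (y + m - 1) / m ≤ (x + m - 1 + (y - x) * m) / m := by
        apply Nat.div_le_div_right
        have : y - x ≤ (y - x) * m := Nat.le_mul_of_pos_right _ h0
        omega
      rw [Nat.add_mul_div_right _ _ h0] at h1
      omega
    omega

lemma rem_succ (b w k : ℕ) :
    w - Spartial b w (k + 1) =
      (w - Spartial b w k) - ((w - Spartial b w k) + (b - k) - 1) / (b - k) := by
  rw [Spartial, ← Nat.sub_sub]

/-- remainder monotone in w -/
lemma rem_mono (b k : ℕ) {w w' : ℕ} (h : w ≤ w') :
    w - Spartial b w k ≤ w' - Spartial b w' k := by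
  induction k with
  | zero => simpa [Spartial]
  | succ k ih =>
    rw [rem_succ, rem_succ]
    exact sub_ceil_mono _ ih

/-- with `w := a·u'` entrywise and `v i` the greedy ceiling
decomposition of `w` into `b` parts, one has `v i (t) ≥ v (i+1) (t)` for all
`t`; moreover if `u'` is weakly increasing then each `v i` is weakly
increasing. -/
theorem ceiling_decomposition_sequences (a b N : ℕ)
    (ha : 0 < a) (hb : 0 < b) (hN : 0 < N) (u' : ℕ → ℕ) :
    (∀ i t, 1 ≤ i → i ≤ b - 1 → 1 ≤ t → t ≤ N →
      vval b (a * u' t) (i + 1) ≤ vval b (a * u' t) i) ∧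
    ((∀ t, 1 ≤ t → t < N → u' t ≤ u' (t + 1)) →
      ∀ i t, 1 ≤ i → i ≤ b → 1 ≤ t → t < N →
        vval b (a * u' t) i ≤ vval b (a * u' (t + 1)) i) := by
  constructor
  · intro i t hi hib _ _
    obtain ⟨k, rfl⟩ : ∃ k, i = k + 1 := ⟨i - 1, by omega⟩
    set w := a * u' t
    have hm : 2 ≤ b - k := by omega
    set m := b - k with hmdef
    have hm1 : b - (k + 1) = m - 1 := by omega
    set R := w - Spartial b w k with hR
    set c := (R + m - 1) / m with hc
    have h1 : vval b w (k + 1) = c := vval_succ b w k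
    have h2 : vval b w (k + 2) = (w - Spartial b w (k+1) + (m - 1) - 1) / (m - 1) := by
      rw [vval_succ, hm1]
    have h3 : w - Spartial b w (k + 1) = R - c := by
      rw [Spartial, ← Nat.sub_sub, ← hR, ← hmdef, ← hc]
    rw [h1, h2, h3]
    rw [Nat.div_le_iff_le_mul_add_pred (by omega)]
    have hkey : R ≤ m * c := le_mul_ceil R m (by omega)
    have hcR : c ≤ R := ceil_le_self R m (by omega)
    have : (m - 1) * c + c = m * c := by
      have : m - 1 + 1 = m := by omega
      calc (m-1)*c + c = (m-1+1)*c := by ring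
        _ = m * c := by rw [this]
    omega
  · intro hmono i t hi hib _ _
    obtain ⟨k, rfl⟩ : ∃ k, i = k + 1 := ⟨i - 1, by omega⟩
    rw [vval_succ, vval_succ]
    apply Nat.div_le_div_right
    have hw : a * u' t ≤ a * u' (t + 1) := by
      apply Nat.mul_le_mul_left
      exact hmono t (by omega) (by omega)
    have := rem_mono b k hw
    omega
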